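/- Let g_1, g_2 be binary morphisms on X = {a,b} defined by g_1(a) = a^s, g_1(b) = a^{γ_1} b a^{γ_2}, g_2(a) = a^t, g_2(b) = a^{δ_1} b a^{δ_2}, where s, t ≥ 1 and γ_1, γ_2, δ_1, δ_2 ≥ 0. Then g_1 g_2 = g_2 g_1 if and only if (s−1)δ_1 = (t−1)γ_1 and (s−1)δ_2 = (t−1)γ_2. -/
import Mathlib


/-- Words over the binary alphabet: `false` is the letter `a`, `true` is the letter `b`. -/
abbrev Word := List Bool

/-- The morphism of the free monoid determined by the images `g` of the letters. -/
def applyG (g : Bool → Word) (w : Word) : Word := w.flatMap g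

/-- `a^n`. -/
def rep (n : ℕ) : Word := List.replicate n false

/-- `b a^{α 1} b a^{α 2} ⋯ b a^{α (p-1)} b`, a word with `p` occurrences of `b`. -/
def blockWord (p : ℕ) (α : ℕ → ℕ) : Word :=
  ((List.range (p - 1)).flatMap fun i => true :: rep (α (i + 1))) ++ [true]

/-- `w^k`. -/
def wordPow (w : Word) (k : ℕ) : Word := (List.replicate k w).flatten

/-- `u` and `v` are `a`-conjugates. -/
def AConj (u v : Word) : Prop :=
  ∃ p q r s : ℕ, ∃ w : Word,
    u = rep p ++ w ++ rep q ∧ v = rep r ++ w ++ rep s ∧ p + q = r + s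

/-- `w` is the infinite word `ω(g)`: for every `n`, the word obtained from `g^n(b)` by deleting
all occurrences of `a` preceding the first occurrence of `b` is a prefix of `w`. -/
def IsOmega (g : Bool → Word) (w : ℕ → Bool) : Prop :=
  ∀ n k : ℕ, ∀ hk : k < (((applyG g)^[n] [true]).dropWhile (fun x => !x)).length,
    (((applyG g)^[n] [true]).dropWhile (fun x => !x)).get ⟨k, hk⟩ = w k

/-- `Aw w i` (for `i ≥ 1`): the number of occurrences of `a` in `w` strictly between the
`i`-th and `(i+1)`-th occurrences of `b` in `w`. -/
noncomputable def Aw (w : ℕ → Bool) (i : ℕ) : ℕ :=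
  Nat.nth (fun n => w n = true) i - Nat.nth (fun n => w n = true) (i - 1) - 1

lemma applyG_append (g : Bool → Word) (u v : Word) :
    applyG g (u ++ v) = applyG g u ++ applyG g v := List.flatMap_append ..

lemma rep_append (m n : ℕ) : rep m ++ rep n = rep (m + n) := by
  unfold rep; rw [List.replicate_add]

lemma applyG_rep (g : Bool → Word) (m n : ℕ) (h : g false = rep n) :
    applyG g (rep m) = rep (m * n) := by
  induction m with
  | zero => simp [applyG, rep]
  | succ k ih =>
    have : rep (k+1) = rep k ++ rep 1 := by rw [rep_append]
    rw [this, applyG_append, ih]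
    simp only [applyG, rep, List.replicate_one, List.flatMap_cons, List.flatMap_nil,
      List.append_nil, h]
    rw [show (List.replicate (k*n) false ++ List.replicate n false : Word) = rep (k*n+n) from rep_append _ _,
      Nat.succ_mul]
    rfl

lemma applyG_single (g : Bool → Word) (c : Bool) : applyG g [c] = g c := by
  simp [applyG]

lemma canon_inj {A B A' B' : ℕ}
    (h : rep A ++ [true] ++ rep B = rep A' ++ [true] ++ rep B') : A = A' ∧ B = B' := by
  have hA : A = A' := by
    have := congrArg (List.takeWhile (fun x => !x)) h
    simpa [rep, List.takeWhile_append, List.takeWhile_replicate] using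
      congrArg List.length this
  have := congrArg List.length h
  simp [rep, hA] at this
  omega

lemma comp_b (g : Bool → Word) (x y A B m : ℕ)
    (ha : g false = rep m) (hb : g true = rep A ++ [true] ++ rep B) :
    applyG g (rep x ++ [true] ++ rep y) = rep (x*m + A) ++ [true] ++ rep (B + y*m) := by
  rw [applyG_append, applyG_append, applyG_rep g x m ha, applyG_rep g y m ha,
    applyG_single, hb, ← rep_append, ← rep_append]
  simp [List.append_assoc]

lemma key {s t γ δ : ℕ} (hs : 1 ≤ s) (ht : 1 ≤ t) :
    δ*s + γ = γ*t + δ ↔ (s-1)*δ = (t-1)*γ := by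
  rw [Nat.sub_mul, Nat.sub_mul, one_mul, mul_comm δ s, mul_comm γ t]
  have h1 : δ ≤ s*δ := Nat.le_mul_of_pos_left δ hs
  have h2 : γ ≤ t*γ := Nat.le_mul_of_pos_left γ ht
  generalize s*δ = X at *
  generalize t*γ = Y at *
  omega

/-- with `g₁(b) = a^{γ₁} b a^{γ₂}` and `g₂(b) = a^{δ₁} b a^{δ₂}`,
`g₁g₂ = g₂g₁` iff `(s-1)δᵢ = (t-1)γᵢ` for `i = 1, 2`. -/
theorem stmt15 (s t : ℕ) (hs : 1 ≤ s) (ht : 1 ≤ t)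
    (γ₁ γ₂ δ₁ δ₂ : ℕ)
    (g₁ g₂ : Bool → Word)
    (h₁a : g₁ false = rep s)
    (h₁b : g₁ true = rep γ₁ ++ [true] ++ rep γ₂)
    (h₂a : g₂ false = rep t)
    (h₂b : g₂ true = rep δ₁ ++ [true] ++ rep δ₂) :
    applyG g₁ ∘ applyG g₂ = applyG g₂ ∘ applyG g₁ ↔
      (s - 1) * δ₁ = (t - 1) * γ₁ ∧ (s - 1) * δ₂ = (t - 1) * γ₂ := by
  constructor
  · intro h
    have hb := congrFun h [true]
    simp only [Function.comp_apply, applyG_single] at hb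
    rw [h₁b, h₂b, comp_b g₁ δ₁ δ₂ γ₁ γ₂ s h₁a h₁b,
      comp_b g₂ γ₁ γ₂ δ₁ δ₂ t h₂a h₂b] at hb
    obtain ⟨e1, e2⟩ := canon_inj hb
    exact ⟨(key hs ht).1 e1, (key hs ht).1 (by linarith)⟩
  · rintro ⟨e1, e2⟩
    have k1 : δ₁*s + γ₁ = γ₁*t + δ₁ := (key hs ht).2 e1
    have k2 : δ₂*s + γ₂ = γ₂*t + δ₂ := (key hs ht).2 e2
    have hcomm : ∀ c, applyG g₁ (g₂ c) = applyG g₂ (g₁ c) := by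
      intro c; cases c
      · rw [h₁a, h₂a, applyG_rep g₁ t s h₁a, applyG_rep g₂ s t h₂a, mul_comm]
      · rw [h₁b, h₂b, comp_b g₁ δ₁ δ₂ γ₁ γ₂ s h₁a h₁b,
          comp_b g₂ γ₁ γ₂ δ₁ δ₂ t h₂a h₂b]
        rw [k1, show γ₂+δ₂*s = δ₂+γ₂*t by linarith]
    funext w
    induction w with
    | nil => rfl
    | cons c w ih =>
      have hc : ∀ g : Bool → Word, applyG g (c :: w) = g c ++ applyG g w := by
        intro g; simp [applyG]
      simp only [Function.comp_apply, hc, applyG_append] at *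
      rw [hcomm, ih]
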